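/- Assume (AL) and (AG). If a bounded continuous function h : ℝ^k → ℝ^n satisfies E[σ_g(W Z + b)ᵀ h(Z)] = 0 for every W ∈ ℝ^{n×k} and b ∈ ℝ^n (σ_g applied entrywise), then h(z) = 0 for all z ∈ ℝ^k. -/

import Mathlib

open MeasureTheory Filter
open scoped RealInnerProductSpace

noncomputable section

/-- Generator feature function φ(z; (W, b)) = σ_g(W z + b), σ_g applied entrywise. -/
noncomputable def phi (n k : ℕ) (σg : ℝ → ℝ) (W : Fin n → Fin k → ℝ) (b : Fin n → ℝ)
    (z : EuclideanSpace ℝ (Fin k)) : EuclideanSpace ℝ (Fin n) :=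
  WithLp.toLp 2 (fun i => σg ((∑ j, W i j * z j) + b i))

/-!
Varying one row of `(W, b)` at a time shows that `∫ σ(w ⬝ z + t) g_j`, with `g_j = h_j q_Z`, does
not depend on `(w, t)`; at `w = 0` it is `σ(t) ∫ g_j`, and `σ` is nonconstant, so all these
integrals vanish. As `r → ∞`, `σ(r (L z - s))` tends to `l + (u - l) 1_{L z > s}` off the null
hyperplane `{L z = s}`, so every half-space integral of `g_j` vanishes. The positive and negative
parts of `g_j` are then densities of two finite measures with the same image under every linear
functional, hence with the same characteristic function; so they are equal and `g_j = 0` a.e.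
Since `q_Z > 0` and `h` is continuous, `h = 0`.
-/

open Set Topology

namespace MeasureTheory

theorem tendsto_integral_comp_mul_mul_atTop {α : Type*} [MeasurableSpace α] {μ : Measure α}
    {σ : ℝ → ℝ} {l u M : ℝ} (hσ : Measurable σ) (hM : ∀ r, |σ r| ≤ M)
    (hl : Tendsto σ atBot (𝓝 l)) (hu : Tendsto σ atTop (𝓝 u)) {f g : α → ℝ}
    (hf : Measurable f) (hf0 : ∀ᵐ z ∂μ, f z ≠ 0) (hg : Integrable g μ) :
    Tendsto (fun r ↦ ∫ z, σ (r * f z) * g z ∂μ) atTop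
      (𝓝 (∫ z, (if 0 < f z then u else l) * g z ∂μ)) := by
  refine tendsto_integral_filter_of_dominated_convergence (fun z ↦ M * |g z|)
    (.of_forall fun r ↦ (hσ.comp (measurable_const.mul hf)).aestronglyMeasurable.mul hg.1)
    (.of_forall fun r ↦ .of_forall fun z ↦ ?_) (hg.abs.const_mul M) ?_
  · rw [Real.norm_eq_abs, abs_mul]
    exact mul_le_mul_of_nonneg_right (hM _) (abs_nonneg _)
  · filter_upwards [hf0] with z hz
    refine Tendsto.mul_const _ ?_
    rcases hz.lt_or_gt with hneg | hpos
    · rw [if_neg hneg.not_gt]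
      exact hl.comp (tendsto_id.atTop_mul_const_of_neg hneg)
    · rw [if_pos hpos]
      exact hu.comp (tendsto_id.atTop_mul_const hpos)

section StrongDual

variable {E : Type*} [NormedAddCommGroup E] [NormedSpace ℝ E] [MeasurableSpace E] [BorelSpace E]

theorem Measure.ext_of_map_strongDual [CompleteSpace E] [SecondCountableTopology E]
    {μ ν : Measure E} [IsFiniteMeasure μ] [IsFiniteMeasure ν]
    (h : ∀ L : StrongDual ℝ E, μ.map L = ν.map L) : μ = ν :=
  Measure.ext_of_charFunDual <| funext fun L ↦ by
    rw [charFunDual_eq_charFun_map_one, charFunDual_eq_charFun_map_one, h]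

theorem ae_eq_zero_of_forall_setIntegral_preimage_Iic_eq_zero [CompleteSpace E]
    [SecondCountableTopology E] {μ : Measure E} {g : E → ℝ} (hg : Integrable g μ)
    (h : ∀ (L : StrongDual ℝ E) (s : ℝ), ∫ z in L ⁻¹' Iic s, g z ∂μ = 0) : g =ᵐ[μ] 0 := by
  set μp := μ.withDensity fun z ↦ ENNReal.ofReal (g z)
  set μm := μ.withDensity fun z ↦ ENNReal.ofReal (-g z)
  have : IsFiniteMeasure μp := isFiniteMeasure_withDensity_ofReal hg.2
  have : IsFiniteMeasure μm := isFiniteMeasure_withDensity_ofReal hg.neg.2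
  have hpm : μp = μm := Measure.ext_of_map_strongDual fun L ↦ Measure.ext_of_Iic _ _ fun s ↦ by
    have hS : MeasurableSet (L ⁻¹' Iic s) := L.continuous.measurable measurableSet_Iic
    have hsplit :=
      integral_eq_lintegral_pos_part_sub_lintegral_neg_part (hg.restrict (s := L ⁻¹' Iic s))
    rw [h L s, ← withDensity_apply _ hS, ← withDensity_apply _ hS, eq_comm, sub_eq_zero,
      ENNReal.toReal_eq_toReal_iff' (measure_ne_top _ _) (measure_ne_top _ _)] at hsplit
    rwa [Measure.map_apply L.continuous.measurable measurableSet_Iic,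
      Measure.map_apply L.continuous.measurable measurableSet_Iic]
  have hae := (withDensity_eq_iff hg.1.aemeasurable.ennreal_ofReal
    hg.1.aemeasurable.neg.ennreal_ofReal (by simpa [μp] using measure_ne_top μp univ)).1 hpm
  filter_upwards [hae] with z hz
  have := congrArg ENNReal.toReal hz
  simp only [ENNReal.toReal_ofReal'] at this
  simp only [Pi.zero_apply]
  rcases le_total 0 (g z) with h0 | h0 <;> simp_all

theorem Measure.addHaar_preimage_singleton_strongDual [FiniteDimensional ℝ E] (μ : Measure E)
    [μ.IsAddHaarMeasure] {L : StrongDual ℝ E} (hL : L ≠ 0) (s : ℝ) : μ (L ⁻¹' {s}) = 0 := by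
  obtain ⟨v, hv⟩ : ∃ v, L v ≠ 0 := by
    by_contra! h; exact hL (ContinuousLinearMap.ext h)
  have hker : LinearMap.ker (L : E →ₗ[ℝ] ℝ) ≠ ⊤ := fun h ↦
    hv (LinearMap.congr_fun (LinearMap.ker_eq_top.1 h) v)
  have hset : L ⁻¹' {s} = (· + -((s / L v) • v)) ⁻¹' LinearMap.ker (L : E →ₗ[ℝ] ℝ) := by
    ext z
    simp [hv, add_neg_eq_zero]
  rw [hset, measure_preimage_add_right]
  exact Measure.addHaar_submodule μ _ hker

theorem setIntegral_preimage_Iic_eq_zero_of_forall_integral_comp_mul_eq_zero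
    [FiniteDimensional ℝ E] {μ : Measure E} [μ.IsAddHaarMeasure] {σ : ℝ → ℝ} {l u M : ℝ}
    (hσ : Measurable σ) (hM : ∀ r, |σ r| ≤ M) (hl : Tendsto σ atBot (𝓝 l))
    (hu : Tendsto σ atTop (𝓝 u)) (hlu : l ≠ u) {g : E → ℝ} (hg : Integrable g μ)
    (hg0 : ∫ z, g z ∂μ = 0)
    (hridge : ∀ (L : StrongDual ℝ E) (t : ℝ), ∫ z, σ (L z + t) * g z ∂μ = 0)
    (L : StrongDual ℝ E) (s : ℝ) : ∫ z in L ⁻¹' Iic s, g z ∂μ = 0 := by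
  rcases eq_or_ne L 0 with rfl | hL
  · by_cases hs : 0 ≤ s <;> simp [Set.preimage, hs, hg0]
  set S := {z | 0 < L z - s}
  have hS : MeasurableSet S := measurableSet_lt measurable_const (by fun_prop)
  have hf0 : ∀ᵐ z ∂μ, L z - s ≠ 0 := by
    simpa [ae_iff, sub_eq_zero, Set.preimage] using
      Measure.addHaar_preimage_singleton_strongDual μ hL s
  have hlim := tendsto_integral_comp_mul_mul_atTop hσ hM hl hu (by fun_prop) hf0 hg
  have hzero : ∀ r : ℝ, ∫ z, σ (r * (L z - s)) * g z ∂μ = 0 := fun r ↦ by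
    simpa [mul_sub, ← sub_eq_add_neg] using hridge (r • L) (-(r * s))
  simp_rw [hzero] at hlim
  have hstep : ∀ z,
      (if 0 < L z - s then u else l) * g z = l * g z + (u - l) * S.indicator g z := by
    intro z
    by_cases hz : 0 < L z - s <;>
      simp only [S, Set.indicator_apply, Set.mem_ofPred_eq, hz, if_true, if_false] <;> ring
  rw [funext hstep, integral_add (hg.const_mul l) ((hg.indicator hS).const_mul _),
    integral_const_mul, integral_const_mul, integral_indicator hS, hg0, mul_zero, zero_add] at hlim
  have hSg : ∫ z in S, g z ∂μ = 0 :=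
    (mul_eq_zero.1 (tendsto_nhds_unique hlim tendsto_const_nhds)).resolve_left
      (sub_ne_zero.2 hlu.symm)
  have hSc : L ⁻¹' Iic s = Sᶜ := by
    ext z
    simp [S]
  rw [hSc, setIntegral_compl hS hg, hg0, hSg, sub_zero]

end StrongDual

end MeasureTheory

theorem StrongDual.apply_eq_sum_euclideanSpace {ι : Type*} [Fintype ι] [DecidableEq ι]
    (L : StrongDual ℝ (EuclideanSpace ℝ ι)) (z : EuclideanSpace ℝ ι) :
    L z = ∑ i, L (EuclideanSpace.single i 1) * z i := by
  conv_lhs => rw [← (EuclideanSpace.basisFun ι ℝ).sum_repr z]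
  simp [mul_comm]

theorem Finset.apply_eq_apply_of_forall_sum_eq_zero {ι A M : Type*} [Fintype ι] [DecidableEq ι]
    [AddCommGroup M] {c : ι → A → M} (hc : ∀ p : ι → A, ∑ i, c i (p i) = 0) (i : ι) (a a' : A) :
    c i a = c i a' := by
  have h := hc (Function.update (fun _ ↦ a') i a)
  simp_rw [Function.apply_update (fun j ↦ c j), Finset.sum_update_of_mem (Finset.mem_univ i)] at h
  have h' := hc fun _ ↦ a'
  rw [← Finset.add_sum_erase _ _ (Finset.mem_univ i)] at h'
  rw [Finset.sdiff_singleton_eq_erase] at h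
  exact add_right_cancel (h.trans h'.symm)

theorem exists_apply_ne_of_tendsto_atBot_atTop {σ : ℝ → ℝ} {l u : ℝ}
    (hl : Tendsto σ atBot (𝓝 l)) (hu : Tendsto σ atTop (𝓝 u)) (hlu : l ≠ u) :
    ∃ a b, σ a ≠ σ b := by
  by_contra! h
  have hl' := tendsto_nhds_unique (hl.congr fun r ↦ h r 0) tendsto_const_nhds
  have hu' := tendsto_nhds_unique (hu.congr fun r ↦ h r 0) tendsto_const_nhds
  exact hlu (hl'.trans hu'.symm)

theorem inner_phi {n k : ℕ} (σ : ℝ → ℝ) (W : Fin n → Fin k → ℝ) (b : Fin n → ℝ)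
    (z : EuclideanSpace ℝ (Fin k)) (y : EuclideanSpace ℝ (Fin n)) :
    ⟪phi n k σ W b z, y⟫ = ∑ j, σ (∑ l, W j l * z l + b j) * y j := by
  simp [phi, PiLp.inner_apply, mul_comm]

theorem integral_eq_zero_and_integral_comp_mul_eq_zero_of_forall_sum {n k : ℕ} {σ : ℝ → ℝ}
    {M a a' : ℝ} (hσ : Measurable σ) (hM : ∀ r, |σ r| ≤ M) (hne : σ a ≠ σ a')
    {G : Fin n → EuclideanSpace ℝ (Fin k) → ℝ} (hG : ∀ j, Integrable (G j))
    (horth : ∀ (W : Fin n → Fin k → ℝ) (b : Fin n → ℝ),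
      ∫ z, ∑ j, σ (∑ l, W j l * z l + b j) * G j z = 0) (j : Fin n) :
    ∫ z, G j z = 0 ∧ ∀ (L : StrongDual ℝ (EuclideanSpace ℝ (Fin k))) (t : ℝ),
      ∫ z, σ (L z + t) * G j z = 0 := by
  set R : Fin n → (Fin k → ℝ) × ℝ → ℝ := fun j p ↦ ∫ z, σ (∑ l, p.1 l * z l + p.2) * G j z
  have hint : ∀ j (w : Fin k → ℝ) t, Integrable fun z ↦ σ (∑ l, w l * z l + t) * G j z :=
    fun j w t ↦ (hG j).bdd_mul (hσ.comp (by fun_prop)).aestronglyMeasurable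
      (.of_forall fun z ↦ (Real.norm_eq_abs _).trans_le (hM _))
  have hR : ∀ P : Fin n → (Fin k → ℝ) × ℝ, ∑ j, R j (P j) = 0 := fun P ↦ by
    rw [← integral_finsetSum _ fun j _ ↦ hint j _ _]
    exact horth (fun j ↦ (P j).1) (fun j ↦ (P j).2)
  have hR0 : ∀ t, R j (0, t) = σ t * ∫ z, G j z := fun t ↦ by
    simp [R, integral_const_mul]
  have hmean : ∫ z, G j z = 0 := by
    by_contra hI
    have h := Finset.apply_eq_apply_of_forall_sum_eq_zero hR j (0, a) (0, a')
    rw [hR0, hR0] at h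
    exact hne (mul_right_cancel₀ hI h)
  refine ⟨hmean, fun L t ↦ ?_⟩
  have h := Finset.apply_eq_apply_of_forall_sum_eq_zero hR j
    (fun l ↦ L (EuclideanSpace.single l 1), t) (0, a)
  rw [hR0, hmean, mul_zero] at h
  simpa [R, ← StrongDual.apply_eq_sum_euclideanSpace] using h

theorem dual_universal_approximation_general
    (n k : ℕ)
    -- (AL): latent density
    (qZ : EuclideanSpace ℝ (Fin k) → ℝ)
    (hq_pos : ∀ z, 0 < qZ z)
    (hq_prob : ∫ z, qZ z = 1)
    -- (AG): generator activation
    (σg : ℝ → ℝ) (hσg_cont : Continuous σg)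
    (hσg_bdd : ∃ M, ∀ r, |σg r| ≤ M)
    (hσg_lim : ∃ l u : ℝ, Tendsto σg atBot (nhds l) ∧ Tendsto σg atTop (nhds u) ∧ l < u)
    -- h bounded and continuous
    (h : EuclideanSpace ℝ (Fin k) → EuclideanSpace ℝ (Fin n))
    (hh_cont : Continuous h) (hh_bdd : ∃ M, ∀ z, ‖h z‖ ≤ M)
    -- orthogonality to all features
    (horth : ∀ (W : Fin n → Fin k → ℝ) (b : Fin n → ℝ),
      (∫ z, ⟪phi n k σg W b z, h z⟫ * qZ z) = 0) :
    ∀ z, h z = 0 := by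
  obtain ⟨l, u, hl, hu, hlu⟩ := hσg_lim
  obtain ⟨Mσ, hMσ⟩ := hσg_bdd
  obtain ⟨Mh, hMh⟩ := hh_bdd
  obtain ⟨a, a', hne⟩ := exists_apply_ne_of_tendsto_atBot_atTop hl hu hlu.ne
  have hq : Integrable qZ := Integrable.of_integral_ne_zero (by simp [hq_prob])
  have hG : ∀ j, Integrable fun z ↦ h z j * qZ z := fun j ↦ hq.bdd_mul (by fun_prop)
    (.of_forall fun z ↦ (PiLp.norm_apply_le (h z) j).trans (hMh z))
  have hridge := integral_eq_zero_and_integral_comp_mul_eq_zero_of_forall_sum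
    hσg_cont.measurable hMσ hne hG fun W b ↦ by
      simpa [inner_phi, Finset.sum_mul, mul_assoc] using horth W b
  have hG0 : ∀ j, (fun z ↦ h z j * qZ z) =ᵐ[volume] 0 := fun j ↦
    ae_eq_zero_of_forall_setIntegral_preimage_Iic_eq_zero (hG j)
      (setIntegral_preimage_Iic_eq_zero_of_forall_integral_comp_mul_eq_zero hσg_cont.measurable
        hMσ hl hu hlu.ne (hG j) (hridge j).1 (hridge j).2)
  have hae : h =ᵐ[volume] 0 := by
    filter_upwards [ae_all_iff.2 hG0] with z hz
    ext j
    exact (mul_eq_zero.1 (hz j)).resolve_right (hq_pos z).ne'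
  exact congrFun ((hh_cont.ae_eq_iff_eq volume continuous_const).1 hae)

/-- dual universal approximation: if a bounded continuous h : ℝ^k → ℝ^n is
orthogonal (in L²(q_Z)) to every generator feature σ_g(WZ + b), then h ≡ 0. -/
theorem dual_universal_approximation
    (n k : ℕ)
    -- (AL): latent density
    (qZ : EuclideanSpace ℝ (Fin k) → ℝ)
    (hq_lip : ∃ L : NNReal, LipschitzWith L qZ)
    (hq_pos : ∀ z, 0 < qZ z)
    (hq_prob : ∫ z, qZ z = 1)
    -- (AG): generator activation
    (σg : ℝ → ℝ) (hσg_cont : Continuous σg)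
    (hσg_bdd : ∃ M, ∀ r, |σg r| ≤ M)
    (hσg_lim : ∃ l u : ℝ, Tendsto σg atBot (nhds l) ∧ Tendsto σg atTop (nhds u) ∧ l < u)
    -- h bounded and continuous
    (h : EuclideanSpace ℝ (Fin k) → EuclideanSpace ℝ (Fin n))
    (hh_cont : Continuous h) (hh_bdd : ∃ M, ∀ z, ‖h z‖ ≤ M)
    -- orthogonality to all features
    (horth : ∀ (W : Fin n → Fin k → ℝ) (b : Fin n → ℝ),
      (∫ z, ⟪phi n k σg W b z, h z⟫ * qZ z) = 0) :
    ∀ z, h z = 0 :=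
  dual_universal_approximation_general n k qZ hq_pos hq_prob σg hσg_cont hσg_bdd hσg_lim h hh_cont
    hh_bdd horth

end
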